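/- arXiv:1506.05564 — 4 statements merged into one kernel-verified Lean document; each statement's English description precedes it below -/
import Mathlib

section
/- Over an algebraically closed field k of characteristic 2, the common zero set in the projective plane of the three partial derivatives of f = x_0^3 x_1 + x_1^3 x_2 + x_2^3 x_0 is exactly the set of seven points (1 : ζ^{3i} : ζ^i) for 0 ≤ i ≤ 6, where ζ is a primitive 7th root of unity in k. -/
/-!
A critical point satisfies `x₂³ = x₀²x₁` and `x₁²x₂ = x₀³`, whence
`x₂⁷ = x₀⁴ · x₁²x₂ = x₀⁷`. The point cannot have `x₀ = 0` (that forces `x₂ = 0`, then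
`x₁ = 0`), so after scaling `x₀ = 1` the coordinate `x₂` is a 7th root of unity `ζ^i`, and
`x₁ = x₂³ = ζ^{3i}`. Conversely, these seven points satisfy the equations because `ζ⁷ = 1`.
-/

/-- Since `a + b = 0 ↔ a = b` in characteristic 2, this is the vanishing of the three partial
derivatives of the Klein quartic there. -/
def IsKleinCritical {R : Type*} [Mul R] [Pow R ℕ] (x₀ x₁ x₂ : R) : Prop :=
  x₀ ^ 2 * x₁ = x₂ ^ 3 ∧ x₀ ^ 3 = x₁ ^ 2 * x₂ ∧ x₁ ^ 3 = x₂ ^ 2 * x₀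

namespace IsKleinCritical

theorem of_pow_seven_eq_one {R : Type*} [CommSemiring R] {ζ : R} (hζ : ζ ^ 7 = 1)
    (c : R) (i : ℕ) : IsKleinCritical c (c * ζ ^ (3 * i)) (c * ζ ^ i) := by
  have h7i : ζ ^ (7 * i) = 1 := by rw [pow_mul, hζ, one_pow]
  refine ⟨by ring, ?_, ?_⟩
  · calc c ^ 3 = c ^ 3 * ζ ^ (7 * i) := by rw [h7i, mul_one]
      _ = (c * ζ ^ (3 * i)) ^ 2 * (c * ζ ^ i) := by ring
  · calc (c * ζ ^ (3 * i)) ^ 3 = (c * ζ ^ i) ^ 2 * c * ζ ^ (7 * i) := by ring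
      _ = (c * ζ ^ i) ^ 2 * c := by rw [h7i, mul_one]

section CommSemiring

variable {R : Type*} [CommSemiring R] {x₀ x₁ x₂ : R}

theorem eq_zero_of_left_eq_zero [NoZeroDivisors R] (h : IsKleinCritical x₀ x₁ x₂)
    (h₀ : x₀ = 0) : x₁ = 0 ∧ x₂ = 0 := by
  obtain ⟨h₁, -, h₃⟩ := h
  subst h₀
  have hx₂ : x₂ = 0 := pow_eq_zero_iff three_ne_zero |>.mp (by rw [← h₁]; ring)
  exact ⟨pow_eq_zero_iff three_ne_zero |>.mp (by rw [h₃, hx₂]; ring), hx₂⟩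

theorem right_pow_seven (h : IsKleinCritical x₀ x₁ x₂) : x₂ ^ 7 = x₀ ^ 7 := by
  obtain ⟨h₁, h₂, -⟩ := h
  calc x₂ ^ 7 = (x₂ ^ 3) ^ 2 * x₂ := by ring
    _ = x₀ ^ 4 * (x₁ ^ 2 * x₂) := by rw [← h₁]; ring
    _ = x₀ ^ 7 := by rw [← h₂]; ring

end CommSemiring

theorem exists_eq_primitiveRoot_pow {K : Type*} [Field K] {x₀ x₁ x₂ ζ : K}
    (h : IsKleinCritical x₀ x₁ x₂) (hx₀ : x₀ ≠ 0) (hζ : IsPrimitiveRoot ζ 7) :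
    ∃ i < 7, x₁ = x₀ * ζ ^ (3 * i) ∧ x₂ = x₀ * ζ ^ i := by
  have hroot : (x₂ / x₀) ^ 7 = 1 := by
    rw [div_pow, h.right_pow_seven, div_self (pow_ne_zero _ hx₀)]
  obtain ⟨i, hi, hζi⟩ := hζ.eq_pow_of_pow_eq_one hroot
  have hx₂ : x₂ = x₀ * ζ ^ i := by rw [hζi, mul_div_cancel₀ _ hx₀]
  refine ⟨i, hi, mul_left_cancel₀ (pow_ne_zero 2 hx₀) ?_, hx₂⟩
  rw [h.1, hx₂]
  ring

end IsKleinCritical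

theorem klein_quartic_critical_points_char_two_general
    {k : Type*} [Field k] [CharP k 2]
    (ζ : k) (hζ : IsPrimitiveRoot ζ 7) :
    ∀ x₀ x₁ x₂ : k, ¬(x₀ = 0 ∧ x₁ = 0 ∧ x₂ = 0) →
      ((x₀ ^ 2 * x₁ + x₂ ^ 3 = 0 ∧ x₀ ^ 3 + x₁ ^ 2 * x₂ = 0 ∧ x₁ ^ 3 + x₂ ^ 2 * x₀ = 0)
        ↔ ∃ i ≤ 6, ∃ c : k, c ≠ 0 ∧ x₀ = c ∧ x₁ = c * ζ ^ (3 * i) ∧ x₂ = c * ζ ^ i) := by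
  intro x₀ x₁ x₂ hne
  simp only [CharTwo.add_eq_zero]
  change IsKleinCritical x₀ x₁ x₂ ↔ _
  constructor
  · intro h
    have hx₀ : x₀ ≠ 0 := fun h₀ => hne ⟨h₀, h.eq_zero_of_left_eq_zero h₀⟩
    obtain ⟨i, hi, hx₁, hx₂⟩ := h.exists_eq_primitiveRoot_pow hx₀ hζ
    exact ⟨i, Nat.le_of_lt_succ hi, x₀, hx₀, rfl, hx₁, hx₂⟩
  · rintro ⟨i, -, c, -, rfl, rfl, rfl⟩
    exact .of_pow_seven_eq_one hζ.pow_eq_one _ i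

/-- Over an algebraically closed field of characteristic 2, the common zero set in `ℙ²`
of the three partial derivatives `x₀²x₁ + x₂³`, `x₀³ + x₁²x₂`, `x₁³ + x₂²x₀` of the Klein
quartic `f = x₀³x₁ + x₁³x₂ + x₂³x₀` is exactly the seven points `(1 : ζ^{3i} : ζ^i)`,
`0 ≤ i ≤ 6`, where `ζ` is a primitive 7th root of unity. Points of `ℙ²` are nonzero
triples up to scaling. -/
theorem klein_quartic_critical_points_char_two
    {k : Type*} [Field k] [IsAlgClosed k] [CharP k 2]
    (ζ : k) (hζ : IsPrimitiveRoot ζ 7) :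
    ∀ x₀ x₁ x₂ : k, ¬(x₀ = 0 ∧ x₁ = 0 ∧ x₂ = 0) →
      ((x₀ ^ 2 * x₁ + x₂ ^ 3 = 0 ∧ x₀ ^ 3 + x₁ ^ 2 * x₂ = 0 ∧ x₁ ^ 3 + x₂ ^ 2 * x₀ = 0)
        ↔ ∃ i ≤ 6, ∃ c : k, c ≠ 0 ∧ x₀ = c ∧ x₁ = c * ζ ^ (3 * i) ∧ x₂ = c * ζ ^ i) :=
  klein_quartic_critical_points_char_two_general ζ hζ
end

section
/- Over an algebraically closed field of characteristic 2, the polynomial f = x_0^3 x_1 + x_1^3 x_2 + x_2^3 x_0 does not vanish at any of its critical points: if P = (1 : ζ^{3i} : ζ^i) with ζ a primitive 7th root of unity and 0 ≤ i ≤ 6, then f(P) ≠ 0. -/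
def kleinQuartic {R : Type*} [CommRing R] (x₀ x₁ x₂ : R) : R :=
  x₀ ^ 3 * x₁ + x₁ ^ 3 * x₂ + x₂ ^ 3 * x₀

theorem kleinQuartic_one_cube_self {R : Type*} [CommRing R] [CharP R 2] (x : R) :
    kleinQuartic 1 (x ^ 3) x = x ^ 10 := by
  have h : x ^ 3 + x ^ 3 = 0 := CharTwo.add_self_eq_zero _
  unfold kleinQuartic
  linear_combination h

theorem klein_quartic_nonzero_at_critical_points_general
    {k : Type*} [Field k] [CharP k 2]
    (ζ : k) (hζ : IsPrimitiveRoot ζ 7) :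
    ∀ i : ℕ, i ≤ 6 →
      (1 : k) ^ 3 * ζ ^ (3 * i) + (ζ ^ (3 * i)) ^ 3 * ζ ^ i + (ζ ^ i) ^ 3 * 1 ≠ 0 := by
  intro i _
  rw [pow_mul']
  change kleinQuartic 1 ((ζ ^ i) ^ 3) (ζ ^ i) ≠ 0
  rw [kleinQuartic_one_cube_self]
  exact pow_ne_zero _ (pow_ne_zero _ (hζ.ne_zero (by norm_num)))

/-- Over an algebraically closed field of characteristic 2, the Klein quartic polynomial
`f = x₀³x₁ + x₁³x₂ + x₂³x₀` does not vanish at any of its critical points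
`P = (1 : ζ^{3i} : ζ^i)`, `0 ≤ i ≤ 6`, where `ζ` is a primitive 7th root of unity. -/
theorem klein_quartic_nonzero_at_critical_points
    {k : Type*} [Field k] [IsAlgClosed k] [CharP k 2]
    (ζ : k) (hζ : IsPrimitiveRoot ζ 7) :
    ∀ i : ℕ, i ≤ 6 →
      (1 : k) ^ 3 * ζ ^ (3 * i) + (ζ ^ (3 * i)) ^ 3 * ζ ^ i + (ζ ^ i) ^ 3 * 1 ≠ 0 :=
  klein_quartic_nonzero_at_critical_points_general ζ hζ
end

section
/- Let k be an algebraically closed field of characteristic 2, and let R = k[w_1, x_1, x_2, z]/(a_0 z + f_0), where a_0 = a(1, w_1) for a homogeneous a ∈ k[w_0, w_1] and f_0 = x_0^{-4}·f with f = x_0^3 x_1 + x_1^3 x_2 + x_2^3 x_0 dehomogenized at x_0 = 1, i.e. f_0 = x_1 + x_1^3 x_2 + x_2^3. If the affine plane curve f_0 = 0 is nonsingular, then the affine hypersurface a_0 z + f_0 = 0 in affine 4-space is nonsingular: the system z·(∂a_0/∂w_1) = ∂f_0/∂x_1 = ∂f_0/∂x_2 = a_0 = a_0 z + f_0 = 0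 has no solution. -/
theorem affine_hypersurface_nonsingular_general
    {k : Type*} [Field k]
    (a₀ : Polynomial k)
    (hcurve : ∀ x₁ x₂ : k,
      ¬(x₁ + x₁ ^ 3 * x₂ + x₂ ^ 3 = 0 ∧ 1 + 3 * x₁ ^ 2 * x₂ = 0 ∧ x₁ ^ 3 + 3 * x₂ ^ 2 = 0)) :
    ∀ w₁ x₁ x₂ z : k,
      ¬(z * (Polynomial.derivative a₀).eval w₁ = 0 ∧
        1 + 3 * x₁ ^ 2 * x₂ = 0 ∧
        x₁ ^ 3 + 3 * x₂ ^ 2 = 0 ∧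
        a₀.eval w₁ = 0 ∧
        a₀.eval w₁ * z + (x₁ + x₁ ^ 3 * x₂ + x₂ ^ 3) = 0) := by
  rintro w₁ x₁ x₂ z ⟨-, hx₁, hx₂, ha, hsurface⟩
  rw [ha, zero_mul, zero_add] at hsurface
  exact hcurve x₁ x₂ ⟨hsurface, hx₁, hx₂⟩

/-- Over an algebraically closed field `k` of characteristic 2, let
`a₀ = a(1, w₁) ∈ k[w₁]` and `f₀ = x₁ + x₁³x₂ + x₂³` (the Klein quartic dehomogenized at
`x₀ = 1`). If the affine plane curve `f₀ = 0` is nonsingular, then the affine hypersurface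
`a₀ z + f₀ = 0` in `𝔸⁴` is nonsingular: the system
`z·(∂a₀/∂w₁) = ∂f₀/∂x₁ = ∂f₀/∂x₂ = a₀ = a₀ z + f₀ = 0` has no solution. -/
theorem affine_hypersurface_nonsingular
    {k : Type*} [Field k] [IsAlgClosed k] [CharP k 2]
    (a₀ : Polynomial k)
    (hcurve : ∀ x₁ x₂ : k,
      ¬(x₁ + x₁ ^ 3 * x₂ + x₂ ^ 3 = 0 ∧ 1 + 3 * x₁ ^ 2 * x₂ = 0 ∧ x₁ ^ 3 + 3 * x₂ ^ 2 = 0)) :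
    ∀ w₁ x₁ x₂ z : k,
      ¬(z * (Polynomial.derivative a₀).eval w₁ = 0 ∧
        1 + 3 * x₁ ^ 2 * x₂ = 0 ∧
        x₁ ^ 3 + 3 * x₂ ^ 2 = 0 ∧
        a₀.eval w₁ = 0 ∧
        a₀.eval w₁ * z + (x₁ + x₁ ^ 3 * x₂ + x₂ ^ 3) = 0) :=
  affine_hypersurface_nonsingular_general a₀ hcurve
end

section
/- Let k be an uncountable algebraically closed field of characteristic 2 and let a ∈ k[w_0, w_1] be homogeneous of degree 2n. For a general such a (squarefree with all critical points of the dehomogenization having nonzero cube term), the section z of L^2 on Z° has only almost nondegenerate critical points, where Z is the hypersurface {z·a + f = 0} in the ℙ(1,1,1,4)-bundle Q over ℙ^1 and f = x_0^3 x_1 + x_1^3 x_2 + x_2^3 x_0. -/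
/-!
Write `g = x₁ + x₁³x₂ + x₂³` for the Klein quartic on the chart `x₀ = 1`.
At a critical point `P` with `a(P₀) ≠ 0`, the partial derivatives in `x₁, x₂` give, in
characteristic 2, `P₁²P₂ = 1` and `P₂² = P₁³`; then `g` takes the value
`P₁ ≠ 0`, so the partial derivative in `x₀` forces `a'(P₀) = 0`. Around `P` the section is a
product `(a(P₀) + c₂x₀² + c₃x₀³ + …)(P₁ + H(x₁, x₂) + …)` with `c₃ ≠ 0` by genericity, and
the quadratic part `H = P₁P₂x₁² + P₁²x₁x₂ + P₂x₂²` has discriminant `P₁⁴ ≠ 0`. Over an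
algebraically closed field a binary quadratic form with nonzero discriminant is a product
of two independent linear forms, so a linear change of `(x₁, x₂)` turns `a(P₀)·H` into
`x₁x₂`, and scaling `x₀` by a cube root of `1 / (c₃P₁)` turns the `x₀³` coefficient into 1.
Every remaining term is a monomial of degree at least three other than `x₀³`.
-/

open MvPolynomial

/-- `s` has an *almost nondegenerate critical point* at `P` (Kollár, V.5.6): in suitable
local coordinates (an invertible linear change `T` of coordinates centered at `P`) it
takes the form `s(P) + α x₁² + x₂x₃ + x₁³ + h` with `h` of order `≥ 3` not involving
`x₁³`. -/
def AlmostNondegCriticalPointAt {k : Type*} [Field k]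
    (s : MvPolynomial (Fin 3) k) (P : Fin 3 → k) : Prop :=
  ∃ (T : Matrix (Fin 3) (Fin 3) k) (α : k) (h : MvPolynomial (Fin 3) k),
    IsUnit T.det ∧
    aeval (fun i => C (P i) + ∑ j, C (T i j) * X j) s
      = C (eval P s) + C α * X 0 ^ 2 + X 1 * X 2 + X 0 ^ 3 + h ∧
    (∀ d ∈ h.support, 3 ≤ d.sum fun _ e => e) ∧
    coeff (Finsupp.single 0 3) h = 0

theorem Polynomial.exists_eq_add_X_pow_four_mul {R : Type*} [Ring R] (q : Polynomial R) :
    ∃ r, q = C (q.coeff 0) + C (q.coeff 1) * X + C (q.coeff 2) * X ^ 2 + C (q.coeff 3) * X ^ 3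
      + X ^ 4 * r := by
  obtain ⟨r, hr⟩ : X ^ 4 ∣ q - (C (q.coeff 0) + C (q.coeff 1) * X + C (q.coeff 2) * X ^ 2
      + C (q.coeff 3) * X ^ 3) := by
    refine X_pow_dvd_iff.2 fun d hd => ?_
    interval_cases d <;> simp [coeff_X, coeff_X_pow]
  exact ⟨r, by rw [← hr, add_sub_cancel]⟩

theorem exists_factorization_of_discrim_ne_zero {K : Type*} [Field K] [IsAlgClosed K]
    {a b c : K} (h : discrim a b c ≠ 0) :
    ∃ α β γ δ : K, α * δ - β * γ ≠ 0 ∧ a = α * γ ∧ b = α * δ + β * γ ∧ c = β * δ := by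
  rcases eq_or_ne a 0 with rfl | ha
  · refine ⟨b, c, 0, 1, ?_, by ring, by ring, by ring⟩
    simpa [discrim] using h
  · obtain ⟨r, hr⟩ := IsAlgClosed.exists_root (.C a * .X ^ 2 + .C b * .X + .C c) (by
      rw [Polynomial.degree_quadratic ha]; decide)
    simp only [Polynomial.IsRoot, Polynomial.eval_add, Polynomial.eval_mul, Polynomial.eval_C,
      Polynomial.eval_pow, Polynomial.eval_X] at hr
    -- `a x² + b x y + c y² = (x - r y) (a x + (b + a r) y)`, and `(b + 2 a r)² = discrim a b c`
    refine ⟨1, -r, a, b + a * r, fun hD => h ?_, by ring, by ring, by linear_combination hr⟩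
    rw [discrim]
    linear_combination (b + 2 * a * r) * hD - 4 * a * hr

theorem exists_linear_change_quadratic_eq_mul {K A : Type*} [Field K] [IsAlgClosed K]
    [CommRing A] (φ : K →+* A) {a b c : K} (h : discrim a b c ≠ 0) :
    ∃ N : Matrix (Fin 2) (Fin 2) K, IsUnit N.det ∧ ∀ x y : A,
      φ a * (φ (N 0 0) * x + φ (N 0 1) * y) ^ 2
        + φ b * ((φ (N 0 0) * x + φ (N 0 1) * y) * (φ (N 1 0) * x + φ (N 1 1) * y))
        + φ c * (φ (N 1 0) * x + φ (N 1 1) * y) ^ 2 = x * y := by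
  obtain ⟨α, β, γ, δ, hD, rfl, rfl, rfl⟩ := exists_factorization_of_discrim_ne_zero h
  set D := α * δ - β * γ
  -- `N` is the inverse of the matrix of the two linear factors
  refine ⟨!![δ / D, -β / D; -γ / D, α / D], ?_, fun x y => ?_⟩
  · rw [Matrix.det_fin_two_of, isUnit_iff_ne_zero]
    convert inv_ne_zero hD using 1
    field_simp
    ring
  · have e₁ : φ α * φ (δ / D) + φ β * φ (-γ / D) = 1 := by
      rw [← map_mul, ← map_mul, ← map_add, ← map_one φ]; congr 1; field_simp; ring
    have e₂ : φ α * φ (-β / D) + φ β * φ (α / D) = 0 := by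
      rw [← map_mul, ← map_mul, ← map_add, ← map_zero φ]; congr 1; field_simp; ring
    have e₃ : φ γ * φ (δ / D) + φ δ * φ (-γ / D) = 0 := by
      rw [← map_mul, ← map_mul, ← map_add, ← map_zero φ]; congr 1; field_simp; ring
    have e₄ : φ γ * φ (-β / D) + φ δ * φ (α / D) = 1 := by
      rw [← map_mul, ← map_mul, ← map_add, ← map_one φ]; congr 1; field_simp; ring
    simp only [Matrix.of_apply, Matrix.cons_val', Matrix.cons_val_zero, Matrix.cons_val_one,
      Matrix.empty_val', Matrix.cons_val_fin_one, map_mul, map_add]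
    set u := φ (δ / D) * x + φ (-β / D) * y
    set v := φ (-γ / D) * x + φ (α / D) * y
    linear_combination (x * (φ γ * u + φ δ * v)) * e₁ + (y * (φ γ * u + φ δ * v)) * e₂
      + x * x * e₃ + x * y * e₄

namespace MvPolynomial

variable {σ R : Type*}

theorem eval_polynomial_aeval_X [CommSemiring R] (a : Polynomial R) (P : σ → R) (i : σ) :
    eval P (Polynomial.aeval (X i : MvPolynomial σ R) a) = a.eval (P i) :=
  eval_toMvPolynomial P i a

theorem exists_polynomial_aeval_C_add_C_mul_X_eq [CommRing R] (a : Polynomial R) {p : R}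
    (hder : a.derivative.eval p = 0) (l : R) (i : σ) :
    ∃ r : MvPolynomial σ R, Polynomial.aeval (C p + C l * X i) a
      = C (a.eval p) + C ((Polynomial.taylor p a).coeff 2 * l ^ 2) * X i ^ 2
        + C ((Polynomial.taylor p a).coeff 3 * l ^ 3) * X i ^ 3 + X i ^ 4 * r := by
  set q := Polynomial.taylor p a
  obtain ⟨r, hr⟩ := q.exists_eq_add_X_pow_four_mul
  have hq₁ : q.coeff 1 = 0 := by rw [Polynomial.taylor_coeff_one, hder]
  refine ⟨C (l ^ 4) * Polynomial.aeval (C l * X i) r, ?_⟩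
  calc Polynomial.aeval (C p + C l * X i) a = Polynomial.aeval (C l * X i) q := by
        simp [q, Polynomial.taylor_apply, Polynomial.aeval_comp, add_comm]
    _ = _ := by
        conv_lhs => rw [hr]
        simp only [Polynomial.taylor_coeff_zero, hq₁, map_add, map_mul, map_pow, map_zero,
          Polynomial.aeval_C, Polynomial.aeval_X, algebraMap_eq, q]
        ring

section OrderThreeExceptCube

variable [CommSemiring R]

noncomputable def orderThreeExceptCubeIdeal (i : σ) : Ideal (MvPolynomial σ R) :=
  Ideal.span ((monomial · 1) '' {d | 3 ≤ d.degree ∧ d ≠ Finsupp.single i 3})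

theorem mem_orderThreeExceptCubeIdeal_iff {i : σ} {f : MvPolynomial σ R} :
    f ∈ orderThreeExceptCubeIdeal i ↔
      ∀ d ∈ f.support, 3 ≤ d.degree ∧ d ≠ Finsupp.single i 3 := by
  refine mem_ideal_span_monomial_image.trans
    (forall₂_congr fun d _ => ⟨?_, fun hd => ⟨d, hd, le_rfl⟩⟩)
  rintro ⟨e, ⟨he3, hei⟩, hle⟩
  obtain ⟨e', rfl⟩ := le_iff_exists_add.1 hle
  refine ⟨he3.trans (Finsupp.degree_mono hle), fun h => hei ?_⟩
  have : e'.degree = 0 := by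
    have := congrArg Finsupp.degree h
    simp only [map_add, Finsupp.degree_single] at this
    omega
  rwa [(Finsupp.degree_eq_zero_iff e').1 this, add_zero] at h

theorem monomial_mem_orderThreeExceptCubeIdeal {i : σ} {d : σ →₀ ℕ} (h3 : 3 ≤ d.degree)
    (hd : d ≠ Finsupp.single i 3) (c : R) : monomial d c ∈ orderThreeExceptCubeIdeal i :=
  mem_orderThreeExceptCubeIdeal_iff.2 fun e he => by
    rw [Finset.mem_singleton.1 (support_monomial_subset he)]
    exact ⟨h3, hd⟩

theorem X_pow_four_mem_orderThreeExceptCubeIdeal (i : σ) :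
    (X i ^ 4 : MvPolynomial σ R) ∈ orderThreeExceptCubeIdeal i := by
  classical
  rw [X_pow_eq_monomial]
  refine monomial_mem_orderThreeExceptCubeIdeal (by simp) (fun h => ?_) 1
  simpa using congrArg (· i) h

theorem X_mul_X_mul_X_mem_orderThreeExceptCubeIdeal {i : σ} (a b : σ) {c : σ} (hc : c ≠ i) :
    (X a * X b * X c : MvPolynomial σ R) ∈ orderThreeExceptCubeIdeal i := by
  classical
  simp only [X, monomial_mul, mul_one]
  refine monomial_mem_orderThreeExceptCubeIdeal (by simp) (fun h => ?_) 1
  have := congrArg (· c) h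
  simp [Finsupp.single_apply, hc] at this

theorem mul_mul_mem_orderThreeExceptCubeIdeal {i : σ} {f g h : MvPolynomial σ R}
    (hf : f ∈ Ideal.span (Set.range X)) (hg : g ∈ Ideal.span (Set.range X))
    (hh : h ∈ Ideal.span (X '' {i}ᶜ)) : f * g * h ∈ orderThreeExceptCubeIdeal i := by
  have hle : Ideal.span (Set.range X) * Ideal.span (Set.range X) * Ideal.span (X '' {i}ᶜ)
      ≤ orderThreeExceptCubeIdeal (R := R) i := by
    rw [Ideal.span_mul_span', Ideal.span_mul_span', Ideal.span_le]
    rintro _ ⟨_, ⟨_, ⟨a, rfl⟩, _, ⟨b, rfl⟩, rfl⟩, _, ⟨c, hc, rfl⟩, rfl⟩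
    exact X_mul_X_mul_X_mem_orderThreeExceptCubeIdeal a b hc
  exact hle (Ideal.mul_mem_mul (Ideal.mul_mem_mul hf hg) hh)

theorem mul_mem_orderThreeExceptCubeIdeal {i : σ} {f g h : MvPolynomial σ R}
    (hf : f ∈ Ideal.span (X '' {i}ᶜ)) (hg : g ∈ Ideal.span (X '' {i}ᶜ))
    (hh : h ∈ Ideal.span (X '' {i}ᶜ)) : f * g * h ∈ orderThreeExceptCubeIdeal i :=
  have hle : Ideal.span (X '' {i}ᶜ) ≤ Ideal.span (Set.range (X : σ → MvPolynomial σ R)) :=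
    Ideal.span_mono (Set.image_subset_range _ _)
  mul_mul_mem_orderThreeExceptCubeIdeal (hle hf) (hle hg) hh

theorem C_mul_X_add_C_mul_X_mem_span {i j j' : σ} (hj : j ≠ i) (hj' : j' ≠ i) (c c' : R) :
    C c * X j + C c' * X j' ∈ Ideal.span (X '' {i}ᶜ : Set (MvPolynomial σ R)) :=
  add_mem (Ideal.mul_mem_left _ _ (Ideal.subset_span ⟨j, hj, rfl⟩))
    (Ideal.mul_mem_left _ _ (Ideal.subset_span ⟨j', hj', rfl⟩))

theorem C_mul_sq_add_C_mul_mul_add_C_mul_sq_mem_span {i : σ} {u v : MvPolynomial σ R}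
    (hu : u ∈ Ideal.span (X '' {i}ᶜ)) (hv : v ∈ Ideal.span (X '' {i}ᶜ)) (a b c : R) :
    C a * u ^ 2 + C b * (u * v) + C c * v ^ 2 ∈ Ideal.span (X '' {i}ᶜ) := by
  simp only [sq]
  exact add_mem (add_mem (Ideal.mul_mem_left _ _ (Ideal.mul_mem_left _ _ hu))
    (Ideal.mul_mem_left _ _ (Ideal.mul_mem_left _ _ hv)))
    (Ideal.mul_mem_left _ _ (Ideal.mul_mem_left _ _ hv))

end OrderThreeExceptCube

theorem mul_sub_mem_orderThreeExceptCubeIdeal {σ R : Type*} [CommRing R] {i : σ}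
    {a₀ c₂ c₃ b₀ : R} {r Q v : MvPolynomial σ R} (hQ : Q ∈ Ideal.span (X '' {i}ᶜ))
    (hv : v - (C b₀ + Q) ∈ orderThreeExceptCubeIdeal i) :
    (C a₀ + C c₂ * X i ^ 2 + C c₃ * X i ^ 3 + X i ^ 4 * r) * v
      - (C (a₀ * b₀) + C (c₂ * b₀) * X i ^ 2 + C (c₃ * b₀) * X i ^ 3 + C a₀ * Q)
      ∈ orderThreeExceptCubeIdeal i := by
  have hX : X i ∈ Ideal.span (Set.range (X : σ → MvPolynomial σ R)) :=
    Ideal.subset_span ⟨i, rfl⟩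
  have expand : (C a₀ + C c₂ * X i ^ 2 + C c₃ * X i ^ 3 + X i ^ 4 * r) * v
      - (C (a₀ * b₀) + C (c₂ * b₀) * X i ^ 2 + C (c₃ * b₀) * X i ^ 3 + C a₀ * Q)
      = X i * X i * Q * (C c₂ + C c₃ * X i) + X i ^ 4 * (r * v)
        + (C a₀ + C c₂ * X i ^ 2 + C c₃ * X i ^ 3) * (v - (C b₀ + Q)) := by
    simp only [map_mul]
    ring
  rw [expand]
  exact add_mem (add_mem (Ideal.mul_mem_right _ _ (mul_mul_mem_orderThreeExceptCubeIdeal hX hX hQ))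
    (Ideal.mul_mem_right _ _ (X_pow_four_mem_orderThreeExceptCubeIdeal i)))
    (Ideal.mul_mem_left _ _ hv)

end MvPolynomial

theorem almostNondegCriticalPointAt_of_sub_mem {k : Type*} [Field k]
    {s : MvPolynomial (Fin 3) k} {P : Fin 3 → k} (T : Matrix (Fin 3) (Fin 3) k)
    (hT : IsUnit T.det) (α : k)
    (h : aeval (fun i => C (P i) + ∑ j, C (T i j) * X j) s
      - (C (eval P s) + C α * X 0 ^ 2 + X 1 * X 2 + X 0 ^ 3) ∈ orderThreeExceptCubeIdeal 0) :
    AlmostNondegCriticalPointAt s P := by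
  rw [mem_orderThreeExceptCubeIdeal_iff] at h
  refine ⟨T, α, _, hT, (add_sub_cancel _ _).symm, fun d hd => (h d hd).1, ?_⟩
  by_contra hc
  exact (h _ (mem_support_iff.2 hc)).2 rfl

def blockCoordChange {K : Type*} [Zero K] (l : K) (N : Matrix (Fin 2) (Fin 2) K) :
    Matrix (Fin 3) (Fin 3) K :=
  !![l, 0, 0; 0, N 0 0, N 0 1; 0, N 1 0, N 1 1]

theorem det_blockCoordChange {K : Type*} [CommRing K] (l : K) (N : Matrix (Fin 2) (Fin 2) K) :
    (blockCoordChange l N).det = l * N.det := by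
  rw [blockCoordChange, Matrix.det_fin_three, Matrix.det_fin_two]
  simp only [Matrix.of_apply, Matrix.cons_val', Matrix.cons_val_zero, Matrix.cons_val_fin_one,
    Matrix.cons_val_one, Matrix.cons_val, mul_zero, zero_mul, sub_zero, add_zero]
  ring

theorem substitution_blockCoordChange {K : Type*} [CommRing K] (P : Fin 3 → K) (l : K)
    (N : Matrix (Fin 2) (Fin 2) K) :
    (fun i => C (P i) + ∑ j, C (blockCoordChange l N i j) * X j)
      = ![C (P 0) + C l * X 0, C (P 1) + (C (N 0 0) * X 1 + C (N 0 1) * X 2),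
        C (P 2) + (C (N 1 0) * X 1 + C (N 1 1) * X 2)] := by
  ext1 i
  fin_cases i <;> simp [blockCoordChange, Fin.sum_univ_three]

theorem aeval_blockCoordChange_polynomial_aeval_mul {K : Type*} [CommRing K] (P : Fin 3 → K)
    (l : K) (N : Matrix (Fin 2) (Fin 2) K) (a : Polynomial K) (g : MvPolynomial (Fin 3) K) :
    aeval (fun i => C (P i) + ∑ j, C (blockCoordChange l N i j) * X j)
        (Polynomial.aeval (X 0 : MvPolynomial (Fin 3) K) a * g)
      = Polynomial.aeval (C (P 0) + C l * X 0) a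
        * aeval ![C (P 0) + C l * X 0, C (P 1) + (C (N 0 0) * X 1 + C (N 0 1) * X 2),
          C (P 2) + (C (N 1 0) * X 1 + C (N 1 1) * X 2)] g := by
  rw [substitution_blockCoordChange, map_mul, ← Polynomial.aeval_algHom_apply, aeval_X]
  rfl

theorem kleinQuartic_eq_of_critical {R : Type*} [CommRing R] [CharP R 2] {p₁ p₂ : R}
    (h₁ : p₁ ^ 2 * p₂ = 1) (h₂ : p₂ ^ 2 = p₁ ^ 3) : p₁ + p₁ ^ 3 * p₂ + p₂ ^ 3 = p₁ := by
  linear_combination 2 * p₁ * h₁ + p₂ * h₂ + p₁ * (CharTwo.two_eq_zero : (2 : R) = 0)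

theorem kleinQuartic_add {R : Type*} [CommRing R] [CharP R 2] (p₁ p₂ u v : R) :
    (p₁ + u) + (p₁ + u) ^ 3 * (p₂ + v) + (p₂ + v) ^ 3
      = (p₁ + p₁ ^ 3 * p₂ + p₂ ^ 3) + (1 + p₁ ^ 2 * p₂) * u + (p₁ ^ 3 + p₂ ^ 2) * v
        + (p₁ * p₂ * u ^ 2 + p₁ ^ 2 * (u * v) + p₂ * v ^ 2)
        + (u * u * (p₂ * u + p₁ * v) + v * v * v + u * u * u * v) := by
  linear_combination (p₁ ^ 2 * p₂ * u + p₂ ^ 2 * v + p₁ ^ 2 * u * v + p₁ * p₂ * u ^ 2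
    + p₂ * v ^ 2 + p₁ * u ^ 2 * v) * (CharTwo.two_eq_zero : (2 : R) = 0)

theorem kleinQuartic_sub_mem_orderThreeExceptCubeIdeal {σ R : Type*} [CommRing R] [CharP R 2]
    {i : σ} {p₁ p₂ : R} (h₁ : p₁ ^ 2 * p₂ = 1) (h₂ : p₂ ^ 2 = p₁ ^ 3) {u v : MvPolynomial σ R}
    (hu : u ∈ Ideal.span (X '' {i}ᶜ)) (hv : v ∈ Ideal.span (X '' {i}ᶜ)) :
    (C p₁ + u) + (C p₁ + u) ^ 3 * (C p₂ + v) + (C p₂ + v) ^ 3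
      - (C p₁ + (C (p₁ * p₂) * u ^ 2 + C (p₁ ^ 2) * (u * v) + C p₂ * v ^ 2))
      ∈ orderThreeExceptCubeIdeal i := by
  have two : (2 : R) = 0 := CharTwo.two_eq_zero
  rw [kleinQuartic_add]
  simp only [← map_pow, ← map_mul, ← map_add, ← map_one C, kleinQuartic_eq_of_critical h₁ h₂,
    show 1 + p₁ ^ 2 * p₂ = 0 by linear_combination h₁ + two,
    show p₁ ^ 3 + p₂ ^ 2 = 0 by linear_combination -h₂ + p₂ ^ 2 * two, map_zero, zero_mul,
    add_zero, add_sub_cancel_left]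
  exact add_mem (add_mem (mul_mem_orderThreeExceptCubeIdeal hu hu
    (add_mem (Ideal.mul_mem_left _ _ hu) (Ideal.mul_mem_left _ _ hv)))
    (mul_mem_orderThreeExceptCubeIdeal hv hv hv))
    (Ideal.mul_mem_right _ _ (mul_mem_orderThreeExceptCubeIdeal hu hu hu))

theorem critical_point_equations_of_mul_kleinQuartic {k : Type*} [Field k] [CharP k 2]
    {a : Polynomial k} {P : Fin 3 → k} (ha : a.eval (P 0) ≠ 0)
    (hcrit : ∀ j : Fin 3, eval P (pderiv j ((Polynomial.aeval (X 0 : MvPolynomial (Fin 3) k) a) *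
      (X 1 + X 1 ^ 3 * X 2 + X 2 ^ 3))) = 0) :
    P 1 ^ 2 * P 2 = 1 ∧ P 2 ^ 2 = P 1 ^ 3 ∧ a.derivative.eval (P 0) = 0 := by
  have h₀ : P 1 + P 1 ^ 3 * P 2 + P 2 ^ 3 = 0 ∨ a.derivative.eval (P 0) = 0 := by
    simpa [Derivation.leibniz, Derivation.map_aeval, pderiv_X, eval_polynomial_aeval_X]
      using hcrit 0
  have h₁ : 1 + P 2 * (3 * P 1 ^ 2) = 0 := by
    simpa [Derivation.leibniz, pderiv_X, eval_polynomial_aeval_X, ha] using hcrit 1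
  have h₂ : P 1 ^ 3 + 3 * P 2 ^ 2 = 0 := by
    simpa [Derivation.leibniz, pderiv_X, eval_polynomial_aeval_X, ha] using hcrit 2
  have two : (2 : k) = 0 := CharTwo.two_eq_zero
  have e₁ : P 1 ^ 2 * P 2 = 1 := by linear_combination -h₁ + 2 * P 1 ^ 2 * P 2 * two
  have e₂ : P 2 ^ 2 = P 1 ^ 3 := by linear_combination -h₂ + 2 * P 2 ^ 2 * two
  have hP₁ : P 1 ≠ 0 := fun h => by simp [h] at e₁
  exact ⟨e₁, e₂, h₀.resolve_left (by rwa [kleinQuartic_eq_of_critical e₁ e₂])⟩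

theorem almostNondegCriticalPointAt_of_normalizing {k : Type*} [Field k] [CharP k 2]
    {a : Polynomial k} {P : Fin 3 → k} (hder : a.derivative.eval (P 0) = 0)
    (h₁ : P 1 ^ 2 * P 2 = 1) (h₂ : P 2 ^ 2 = P 1 ^ 3) (l : k)
    (hl : (Polynomial.taylor (P 0) a).coeff 3 * l ^ 3 * P 1 = 1)
    {N : Matrix (Fin 2) (Fin 2) k} (hN : IsUnit N.det)
    (hNQ : (C (a.eval (P 0) * (P 1 * P 2)) : MvPolynomial (Fin 3) k)
        * (C (N 0 0) * X 1 + C (N 0 1) * X 2) ^ 2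
      + C (a.eval (P 0) * P 1 ^ 2)
        * ((C (N 0 0) * X 1 + C (N 0 1) * X 2) * (C (N 1 0) * X 1 + C (N 1 1) * X 2))
      + C (a.eval (P 0) * P 2) * (C (N 1 0) * X 1 + C (N 1 1) * X 2) ^ 2 = X 1 * X 2) :
    AlmostNondegCriticalPointAt
      ((Polynomial.aeval (X 0 : MvPolynomial (Fin 3) k) a) * (X 1 + X 1 ^ 3 * X 2 + X 2 ^ 3)) P := by
  set q := Polynomial.taylor (P 0) a
  have hl₀ : l ≠ 0 := by rintro rfl; simp at hl
  refine almostNondegCriticalPointAt_of_sub_mem (blockCoordChange l N)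
    (by rw [det_blockCoordChange]; exact (isUnit_iff_ne_zero.2 hl₀).mul hN)
    (q.coeff 2 * l ^ 2 * P 1) ?_
  obtain ⟨r, hr⟩ := exists_polynomial_aeval_C_add_C_mul_X_eq a hder l (0 : Fin 3)
  set u : MvPolynomial (Fin 3) k := C (N 0 0) * X 1 + C (N 0 1) * X 2
  set v : MvPolynomial (Fin 3) k := C (N 1 0) * X 1 + C (N 1 1) * X 2
  set Q := C (P 1 * P 2) * u ^ 2 + C (P 1 ^ 2) * (u * v) + C (P 2) * v ^ 2
  have hs : aeval (fun i => C (P i) + ∑ j, C (blockCoordChange l N i j) * X j)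
      ((Polynomial.aeval (X 0 : MvPolynomial (Fin 3) k) a) * (X 1 + X 1 ^ 3 * X 2 + X 2 ^ 3))
      = Polynomial.aeval (C (P 0) + C l * X 0) a
        * ((C (P 1) + u) + (C (P 1) + u) ^ 3 * (C (P 2) + v) + (C (P 2) + v) ^ 3) := by
    rw [aeval_blockCoordChange_polynomial_aeval_mul]
    simp only [map_add, map_mul, map_pow, aeval_X]
    rfl
  have htarget : C (eval P ((Polynomial.aeval (X 0 : MvPolynomial (Fin 3) k) a)
      * (X 1 + X 1 ^ 3 * X 2 + X 2 ^ 3))) + C (q.coeff 2 * l ^ 2 * P 1) * X 0 ^ 2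
        + X 1 * X 2 + X 0 ^ 3
      = C (a.eval (P 0) * P 1) + C (q.coeff 2 * l ^ 2 * P 1) * X 0 ^ 2
        + C (q.coeff 3 * l ^ 3 * P 1) * X 0 ^ 3 + C (a.eval (P 0)) * Q := by
    rw [map_mul, eval_polynomial_aeval_X, hl, map_one, one_mul, ← hNQ]
    simp only [Q, map_add, map_mul, map_pow, eval_X, kleinQuartic_eq_of_critical h₁ h₂]
    ring
  have hu : u ∈ Ideal.span (X '' {0}ᶜ) := C_mul_X_add_C_mul_X_mem_span (by decide) (by decide) _ _
  have hv : v ∈ Ideal.span (X '' {0}ᶜ) := C_mul_X_add_C_mul_X_mem_span (by decide) (by decide) _ _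
  rw [hs, hr, htarget]
  exact mul_sub_mem_orderThreeExceptCubeIdeal
    (C_mul_sq_add_C_mul_mul_add_C_mul_sq_mem_span hu hv _ _ _)
    (kleinQuartic_sub_mem_orderThreeExceptCubeIdeal h₁ h₂ hu hv)

theorem almostNondegCriticalPointAt_polynomial_mul_kleinQuartic {k : Type*} [Field k]
    [IsAlgClosed k] [CharP k 2] {a : Polynomial k} {P : Fin 3 → k} (ha : a.eval (P 0) ≠ 0)
    (hder : a.derivative.eval (P 0) = 0) (hq₃ : (Polynomial.taylor (P 0) a).coeff 3 ≠ 0)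
    (h₁ : P 1 ^ 2 * P 2 = 1) (h₂ : P 2 ^ 2 = P 1 ^ 3) :
    AlmostNondegCriticalPointAt
      ((Polynomial.aeval (X 0 : MvPolynomial (Fin 3) k) a) * (X 1 + X 1 ^ 3 * X 2 + X 2 ^ 3)) P := by
  have hP₁ : P 1 ≠ 0 := fun h => by simp [h] at h₁
  obtain ⟨l, hl⟩ :=
    IsAlgClosed.exists_pow_nat_eq ((Polynomial.taylor (P 0) a).coeff 3 * P 1)⁻¹ three_pos
  have hdisc : discrim (a.eval (P 0) * (P 1 * P 2)) (a.eval (P 0) * P 1 ^ 2) (a.eval (P 0) * P 2)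
      = (a.eval (P 0) * P 1 ^ 2) ^ 2 := by
    rw [discrim]
    linear_combination (-2 * a.eval (P 0) ^ 2 * P 1 * P 2 ^ 2) * (CharTwo.two_eq_zero : (2 : k) = 0)
  obtain ⟨N, hN, hNQ⟩ := exists_linear_change_quadratic_eq_mul (C : k →+* MvPolynomial (Fin 3) k)
    (hdisc ▸ pow_ne_zero _ (mul_ne_zero ha (pow_ne_zero _ hP₁)))
  refine almostNondegCriticalPointAt_of_normalizing hder h₁ h₂ l ?_ hN (hNQ (X 1) (X 2))
  rw [hl]
  field_simp

theorem section_z_only_almost_nondegenerate_critical_points_general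
    {k : Type*} [Field k] [IsAlgClosed k] [CharP k 2]
    (a : Polynomial k)
    (hgen : ∀ p : k, (Polynomial.derivative a).eval p = 0 →
      a.eval p ≠ 0 ∧ (a.comp (Polynomial.X + Polynomial.C p)).coeff 3 ≠ 0) :
    ∀ P : Fin 3 → k,
      a.eval (P 0) ≠ 0 →
      (∀ j : Fin 3, eval P (pderiv j
          ((Polynomial.aeval (X 0 : MvPolynomial (Fin 3) k) a) *
            (X 1 + X 1 ^ 3 * X 2 + X 2 ^ 3))) = 0) →
      AlmostNondegCriticalPointAt
        ((Polynomial.aeval (X 0 : MvPolynomial (Fin 3) k) a) *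
          (X 1 + X 1 ^ 3 * X 2 + X 2 ^ 3)) P := by
  intro P ha hcrit
  obtain ⟨h₁, h₂, hder⟩ := critical_point_equations_of_mul_kleinQuartic ha hcrit
  exact almostNondegCriticalPointAt_polynomial_mul_kleinQuartic ha hder (hgen _ hder).2 h₁ h₂

/-- (Lemma 3.6.) Over an uncountable algebraically closed field `k` of characteristic 2,
for a general `a` (squarefree, and at every critical point `p` of the dehomogenization
both `a(p) ≠ 0` and the cube term of the local expansion is nonzero), the section `z` of
`L²` on `Z° ⊂ Z = {z·a + f = 0}` has only almost nondegenerate critical points.  On the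
chart `w₀ ≠ 0`, `x₀ ≠ 0`, `a ≠ 0` one has `z = -f/a`, and (since `a` is a unit and the
characteristic is 2) `z` has only almost nondegenerate critical points iff `a²z = a·f`
does; so the statement reads: at every critical point `P` of `s = a(w)·g(x₁,x₂)` with
`a(P₀) ≠ 0`, where `g = x₁ + x₁³x₂ + x₂³` is the dehomogenized Klein quartic, `s` has an
almost nondegenerate critical point. -/
theorem section_z_only_almost_nondegenerate_critical_points
    {k : Type*} [Field k] [IsAlgClosed k] [CharP k 2] [Uncountable k]
    (n : ℕ) (a : Polynomial k) (hdeg : a.natDegree ≤ 2 * n)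
    (hsf : Squarefree a)
    (hgen : ∀ p : k, (Polynomial.derivative a).eval p = 0 →
      a.eval p ≠ 0 ∧ (a.comp (Polynomial.X + Polynomial.C p)).coeff 3 ≠ 0) :
    ∀ P : Fin 3 → k,
      a.eval (P 0) ≠ 0 →
      (∀ j : Fin 3, eval P (pderiv j
          ((Polynomial.aeval (X 0 : MvPolynomial (Fin 3) k) a) *
            (X 1 + X 1 ^ 3 * X 2 + X 2 ^ 3))) = 0) →
      AlmostNondegCriticalPointAt
        ((Polynomial.aeval (X 0 : MvPolynomial (Fin 3) k) a) *
          (X 1 + X 1 ^ 3 * X 2 + X 2 ^ 3)) P :=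
  section_z_only_almost_nondegenerate_critical_points_general a hgen
end
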